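/- arXiv:2112.15137 — 3 statements merged into one kernel-verified Lean document; each statement's English description precedes it below -/
import Mathlib

section
/- Let f_1, ..., f_m be a regular sequence of homogeneous polynomials in S = k[x_1, ..., x_n], and let K' = K(f_1, ..., f_m) be the Koszul complex. If F' is a subcomplex of K' (a complex of free modules with degree-preserving split-injective maps into K' commuting with differentials, where the inclusions are matrices over k in suitable bases), then the differentials of F' are, in suitable bases, matrices whose entries lie in the k-subalgebra R = k[f_1, ..., f_m] ⊆ S, and are in fact k-linear combinations of the f_i. -/
open MvPolynomial

noncomputable section

variable (k : Type*) [Field k] (n m : ℕ)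

/-- The basis of the `d`-th term of the Koszul complex on `m` elements:
size-`d` subsets of `{1, ..., m}`. -/
abbrev KoszulBasis (d : ℕ) := {T : Finset (Fin m) // T.card = d}

/-- The matrix of the Koszul differential `∂_{d+1} : K_{d+1} → K_d` for the
Koszul complex `K(f_1, ..., f_m)`: the `(U, T)` entry is `± f_i` if
`T = U ∪ {i}` with `i ∉ U`, and `0` otherwise. -/
def koszulMatrix (f : Fin m → MvPolynomial (Fin n) k) (d : ℕ) :
    Matrix (KoszulBasis m d) (KoszulBasis m (d + 1)) (MvPolynomial (Fin n) k) :=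
  fun U T =>
    if U.1 ⊆ T.1 then
      ∑ i ∈ T.1 \ U.1, (-1 : MvPolynomial (Fin n) k) ^ ((U.1.filter (fun j => j < i)).card + 1) * f i
    else 0

set_option synthInstance.maxHeartbeats 1000000 in
/-- **Differentials of a subcomplex of a Koszul complex are linear in the `f_i`.**
Let `f_1, ..., f_m` be a regular sequence of homogeneous polynomials in
`S = k[x_1, ..., x_n]` and `K' = K(f_1, ..., f_m)` the Koszul complex. Suppose a
subcomplex `F'` of `K'` is given by ranks `r d`, differentials `B d` (matrices
over `S`), and split-injective inclusions represented by matrices `C d` over `k`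
with linearly independent columns, such that the squares commute
(`C d · B d = ∂ · C (d+1)`). Then every entry of every differential `B d` is a
`k`-linear combination of `f_1, ..., f_m` (in particular it lies in the
subalgebra `R = k[f_1, ..., f_m] ⊆ S`). -/
theorem subcomplex_differential_entries_linear
    (f : Fin m → MvPolynomial (Fin n) k)
    (deg : Fin m → ℕ)
    (hhom : ∀ i, (f i).IsHomogeneous (deg i))
    (hreg : RingTheory.Sequence.IsRegular (MvPolynomial (Fin n) k) (List.ofFn f))
    (r : ℕ → ℕ)
    (B : ∀ d, Matrix (Fin (r d)) (Fin (r (d + 1))) (MvPolynomial (Fin n) k))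
    (C : ∀ d, Matrix (KoszulBasis m d) (Fin (r d)) k)
    (hC : ∀ d, LinearIndependent k (fun j (U : KoszulBasis m d) => C d U j))
    (hcomm : ∀ d, (C d).map (algebraMap k (MvPolynomial (Fin n) k)) * B d
      = koszulMatrix k n m f d * (C (d + 1)).map (algebraMap k (MvPolynomial (Fin n) k))) :
    ∀ d p q, ∃ c : Fin m → k, (B d) p q = ∑ t, c t • f t := by
  classical
  intro d p q
  set W : Submodule k (MvPolynomial (Fin n) k) := Submodule.span k (Set.range f) with hW
  -- every entry of the Koszul matrix lies in W
  have hK : ∀ (U : KoszulBasis m d) (T : KoszulBasis m (d + 1)),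
      koszulMatrix k n m f d U T ∈ W := by
    intro U T
    rw [koszulMatrix]
    split_ifs with h
    · refine Submodule.sum_mem _ fun i _ => ?_
      have he : ∀ e : ℕ, (-1 : MvPolynomial (Fin n) k) ^ e * f i ∈ W := by
        intro e
        have : (-1 : MvPolynomial (Fin n) k) ^ e * f i = ((-1 : k) ^ e) • f i := by
          rw [Algebra.smul_def, map_pow, map_neg, map_one]
        rw [this]
        exact W.smul_mem _ (Submodule.subset_span ⟨i, rfl⟩)
      exact he _
    · exact W.zero_mem
  -- entries of the RHS product lie in W
  have hRHS : ∀ U : KoszulBasis m d,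
      (koszulMatrix k n m f d * (C (d + 1)).map (algebraMap k (MvPolynomial (Fin n) k))) U q ∈ W := by
    intro U
    rw [Matrix.mul_apply]
    refine Submodule.sum_mem _ fun T _ => ?_
    rw [Matrix.map_apply, mul_comm, ← Algebra.smul_def]
    exact W.smul_mem _ (hK U T)
  -- image in the quotient
  have key : ∀ U : KoszulBasis m d, ∑ p', C d U p' • W.mkQ (B d p' q) = 0 := by
    intro U
    have h := Matrix.ext_iff.mpr (hcomm d) U q
    rw [Matrix.mul_apply] at h
    simp only [Matrix.map_apply, ← Algebra.smul_def] at h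
    have h0 : W.mkQ (∑ p', C d U p' • B d p' q) = 0 := by
      rw [h, Submodule.mkQ_apply, Submodule.Quotient.mk_eq_zero]
      exact hRHS U
    simpa [map_sum, map_smul] using h0
  have hzero : ∀ p', W.mkQ (B d p' q) = 0 := by
    intro p'
    rw [← Module.forall_dual_apply_eq_zero_iff k]
    intro φ
    have hsum : ∀ U : KoszulBasis m d, ∑ p'', φ (W.mkQ (B d p'' q)) * C d U p'' = 0 := by
      intro U
      have := congrArg φ (key U)
      simpa [map_sum, map_smul, mul_comm, smul_eq_mul] using this
    have := Fintype.linearIndependent_iff.mp (hC d)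
      (fun p'' => φ (W.mkQ (B d p'' q))) ?_ p'
    · exact this
    · funext U
      simpa [Finset.sum_apply, smul_eq_mul] using hsum U
  have hmem : B d p q ∈ W := by
    have := hzero p
    rwa [Submodule.mkQ_apply, Submodule.Quotient.mk_eq_zero] at this
  obtain ⟨c, hc⟩ := (Submodule.mem_span_range_iff_exists_fun k).mp hmem
  exact ⟨c, hc.symm⟩


end
end

section
/- Let h = (h_0, h_1, ..., h_n) be a sequence of nonnegative integers with h_0 = 1. If h_{i+1} ≤ h_i^{(i)} for all 1 ≤ i ≤ n-1, where h_i^{(i)} is the shifted Macaulay expansion, then h_i ≤ C(n, i) for all i. (Any sequence satisfying the Kruskal–Katona growth bound with h_0 = 1 is bounded by the Hilbert function of the full exterior algebra.) -/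
/-- The shifted Macaulay operator `a ↦ a^{(i)}`: if `a` has Macaulay expansion
`a = C(a_i, i) + C(a_{i-1}, i-1) + ⋯ + C(a_j, j)` with `a_i > ⋯ > a_j ≥ j ≥ 1`,
then `a^{(i)} = C(a_i, i+1) + C(a_{i-1}, i) + ⋯ + C(a_j, j+1)`. Computed greedily;
by convention `0^{(i)} = 0`. `macaulayShift i a = a^{(i)}`. -/
def macaulayShift : ℕ → ℕ → ℕ
  | 0, _ => 0
  | (i + 1), a =>
    if a = 0 then 0
    else
      let m := Nat.findGreatest (fun t => Nat.choose t (i + 1) ≤ a) (a + i + 1)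
      Nat.choose m (i + 2) + macaulayShift i (a - Nat.choose m (i + 1))

lemma macaulayShift_zero (i : ℕ) : macaulayShift i 0 = 0 := by
  cases i <;> simp [macaulayShift]

lemma macaulayShift_le (i : ℕ) :
    ∀ a n : ℕ, a ≤ n.choose i → macaulayShift i a ≤ n.choose (i + 1) := by
  induction i with
  | zero => intro a n _; simp [macaulayShift]
  | succ i ih =>
    intro a n ha
    by_cases h0 : a = 0
    · simp [macaulayShift, h0]
    rw [macaulayShift]
    simp only [h0, if_false]
    set m := Nat.findGreatest (fun t => Nat.choose t (i + 1) ≤ a) (a + i + 1) with hm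
    have ha1 : 1 ≤ a := Nat.one_le_iff_ne_zero.mpr h0
    have hin : i + 1 ≤ n := by
      by_contra hc
      push_neg at hc
      have : n.choose (i + 1) = 0 := Nat.choose_eq_zero_of_lt hc
      omega
    have hPi : Nat.choose (i + 1) (i + 1) ≤ a := by simpa using ha1
    have hmge : i + 1 ≤ m := by
      rw [hm]
      exact Nat.le_findGreatest (by omega) hPi
    have hPm : Nat.choose m (i + 1) ≤ a := by
      rw [hm]
      exact Nat.findGreatest_spec (P := fun t => Nat.choose t (i + 1) ≤ a) (by omega) hPi
    have hmn : m ≤ n := by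
      by_contra hc
      push_neg at hc
      have h1 : Nat.choose (n + 1) (i + 1) ≤ Nat.choose m (i + 1) :=
        Nat.choose_le_choose _ hc
      have h2 : Nat.choose (n + 1) (i + 1) = Nat.choose n i + Nat.choose n (i + 1) :=
        Nat.choose_succ_succ n i
      have h3 : 0 < Nat.choose n i := Nat.choose_pos (by omega)
      omega
    have hnotTop : ¬ Nat.choose (a + i + 1) (i + 1) ≤ a := by
      have e1 : Nat.choose (a + i + 1) a = Nat.choose (a + i + 1) (i + 1) := by
        have := Nat.choose_symm (n := a + i + 1) (k := i + 1) (by omega)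
        simpa [show a + i + 1 - (i + 1) = a by omega] using this
      have e2 : Nat.choose (a + 1) a ≤ Nat.choose (a + i + 1) a :=
        Nat.choose_le_choose _ (by omega)
      have e3 : Nat.choose (a + 1) a = a + 1 := by
        rw [← Nat.choose_symm (by omega : a ≤ a + 1)]
        simp
      omega
    have hmb : m ≤ a + i + 1 := by
      rw [hm]; exact Nat.findGreatest_le _
    have hmlt : m < a + i + 1 := by
      rcases eq_or_lt_of_le hmb with heq | hlt
      · rw [heq] at hPm; exact absurd hPm hnotTop
      · exact hlt
    have hnot : ¬ Nat.choose (m + 1) (i + 1) ≤ a :=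
      Nat.findGreatest_is_greatest (P := fun t => Nat.choose t (i + 1) ≤ a)
        (n := a + i + 1) (by rw [← hm]; omega) (by omega)
    have hss : Nat.choose (m + 1) (i + 1) = Nat.choose m i + Nat.choose m (i + 1) :=
      Nat.choose_succ_succ m i
    have halt : a < Nat.choose m i + Nat.choose m (i + 1) := by omega
    have hbridge : Nat.choose n (i + 1 + 1) = Nat.choose n (i + 2) := rfl
    rcases eq_or_lt_of_le hmn with heq | hlt
    · have hz : a - Nat.choose m (i + 1) = 0 := by subst heq; omega
      rw [hz, macaulayShift_zero]
      have : Nat.choose m (i + 2) ≤ Nat.choose n (i + 2) := Nat.choose_le_choose _ hmn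
      omega
    · have hrest : a - Nat.choose m (i + 1) ≤ Nat.choose m i := by omega
      have hihr := ih (a - Nat.choose m (i + 1)) m hrest
      have hsum : Nat.choose (m + 1) (i + 1 + 1) = Nat.choose m (i + 1) + Nat.choose m (i + 1 + 1) :=
        Nat.choose_succ_succ m (i + 1)
      have hb2 : Nat.choose m (i + 1 + 1) = Nat.choose m (i + 2) := rfl
      have hb3 : Nat.choose (m + 1) (i + 1 + 1) = Nat.choose (m + 1) (i + 2) := rfl
      have hfin : Nat.choose (m + 1) (i + 2) ≤ Nat.choose n (i + 2) :=
        Nat.choose_le_choose _ (by omega)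
      omega

/-- **Kruskal–Katona growth bound implies the exterior-algebra bound.**
If `h = (h_0, ..., h_n)` is a sequence of nonnegative integers with `h_0 = 1`,
`h_1 ≤ n`, and `h_{i+1} ≤ h_i^{(i)}` for all `1 ≤ i ≤ n - 1`, then
`h_i ≤ C(n, i)` for all `i ≤ n`. -/
theorem kruskal_katona_bound (n : ℕ) (h : ℕ → ℕ)
    (h0 : h 0 = 1) (h1 : h 1 ≤ n)
    (hg : ∀ i, 1 ≤ i → i ≤ n - 1 → h (i + 1) ≤ macaulayShift i (h i)) :
    ∀ i, i ≤ n → h i ≤ Nat.choose n i := by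
  intro i
  induction i with
  | zero => intro _; simp [h0]
  | succ i ih =>
    intro hsi
    have hi : i ≤ n := by omega
    rcases Nat.eq_zero_or_pos i with rfl | hpos
    · simpa using h1
    · have hb := hg i hpos (by omega)
      exact hb.trans (macaulayShift_le i (h i) n (ih hi))
end

section
/- For a positive integer a and positive integer i, if a ≤ C(m, i) for some m ≥ i, then a^{(i)} ≤ C(m, i+1), where a^{(i)} is defined via the Macaulay expansion of a. (Monotonicity of the shifted Macaulay operator against binomial coefficients.) -/
/-- `a + 1 ≤ C(a + k, k)` for `k ≥ 1`. -/
lemma succ_le_choose_add (a k : ℕ) (hk : 1 ≤ k) : a + 1 ≤ (a + k).choose k := by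
  obtain ⟨j, rfl⟩ : ∃ j, k = j + 1 := ⟨k - 1, by omega⟩
  induction a with
  | zero => simp
  | succ n ih =>
    have h1 : 0 < (n + (j + 1)).choose j := Nat.choose_pos (by omega)
    have h2 : n + 1 + (j + 1) = (n + (j + 1)) + 1 := by omega
    rw [h2, Nat.choose_succ_succ']
    omega

/-- strict monotonicity of `choose` in the top argument, for `1 ≤ k ≤ m`. -/
lemma choose_lt_choose_of_lt (k m t : ℕ) (hk : 1 ≤ k) (hkm : k ≤ m) (h : m < t) :
    Nat.choose m k < Nat.choose t k := by
  have h1 : Nat.choose m k < Nat.choose (m + 1) k := by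
    obtain ⟨j, rfl⟩ : ∃ j, k = j + 1 := ⟨k - 1, by omega⟩
    rw [Nat.choose_succ_succ']
    have := Nat.choose_pos (show j ≤ m by omega)
    omega
  exact lt_of_lt_of_le h1 (Nat.choose_le_choose k h)

lemma macaulayShift_le_choose_aux : ∀ i a m : ℕ, 0 < a → 0 < i → i ≤ m →
    a ≤ Nat.choose m i → macaulayShift i a ≤ Nat.choose m (i + 1) := by
  intro i
  induction i with
  | zero => intro a m _ hi; omega
  | succ n ih =>
    intro a m ha _ hm hle
    set P : ℕ → Prop := fun t => Nat.choose t (n + 1) ≤ a with hP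
    set t := Nat.findGreatest P (a + n + 1) with htdef
    have hshift : macaulayShift (n + 1) a
        = Nat.choose t (n + 2) + macaulayShift n (a - Nat.choose t (n + 1)) := by
      rw [macaulayShift, if_neg (by omega)]
    have hP1 : P (n + 1) := by
      simp only [hP, Nat.choose_self]
      omega
    have ht1 : n + 1 ≤ t := Nat.le_findGreatest (by omega) hP1
    have hspec : Nat.choose t (n + 1) ≤ a := Nat.findGreatest_spec (P := P) (by omega) hP1
    have htop : a < Nat.choose (a + n + 1) (n + 1) := by
      have h := succ_le_choose_add a (n + 1) (by omega)
      have h2 : a + (n + 1) = a + n + 1 := by omega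
      rw [h2] at h
      omega
    have htlt : t < a + n + 1 := by
      have hle' : t ≤ a + n + 1 := Nat.findGreatest_le (P := P) (a + n + 1)
      rcases Nat.lt_or_ge t (a + n + 1) with h | h
      · exact h
      · have hteq : t = a + n + 1 := le_antisymm hle' h
        rw [hteq] at hspec
        omega
    have hfail : ¬ P (t + 1) := by
      apply Nat.findGreatest_is_greatest (n := a + n + 1)
      · rw [← htdef]; omega
      · omega
    have hfail' : a < Nat.choose (t + 1) (n + 1) := by
      simp only [hP, not_le] at hfail
      exact hfail
    have htm : t ≤ m := by
      by_contra h
      have := choose_lt_choose_of_lt (n + 1) m t (by omega) hm (by omega)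
      omega
    have hpascal : Nat.choose (t + 1) (n + 1) = Nat.choose t n + Nat.choose t (n + 1) :=
      Nat.choose_succ_succ' t n
    have hpascal2 : Nat.choose (t + 1) (n + 2) = Nat.choose t (n + 1) + Nat.choose t (n + 2) :=
      Nat.choose_succ_succ' t (n + 1)
    set b := a - Nat.choose t (n + 1) with hb
    have hbc : b < Nat.choose t n := by omega
    rw [hshift]
    rcases Nat.eq_zero_or_pos n with rfl | hn
    · have hz : macaulayShift 0 b = 0 := rfl
      rw [hz]
      simpa using Nat.choose_le_choose 2 htm
    rcases Nat.eq_zero_or_pos b with hb0 | hb0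
    · rw [hb0]
      have hz : macaulayShift n 0 = 0 := by
        cases n with
        | zero => rfl
        | succ k => rw [macaulayShift, if_pos rfl]
      rw [hz]
      simpa using Nat.choose_le_choose (n + 2) htm
    · have htm' : t < m := by
        rcases lt_or_eq_of_le htm with h | h
        · exact h
        · exfalso; rw [← h] at hle; omega
      have hrec : macaulayShift n b ≤ Nat.choose t (n + 1) :=
        ih b t hb0 hn (by omega) (by omega)
      calc Nat.choose t (n + 2) + macaulayShift n b
          ≤ Nat.choose t (n + 2) + Nat.choose t (n + 1) := by omega
        _ = Nat.choose (t + 1) (n + 2) := by omega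
        _ ≤ Nat.choose m (n + 2) := Nat.choose_le_choose (n + 2) htm'

/-- **Monotonicity of the shifted Macaulay operator against binomial coefficients.**
For positive integers `a` and `i`, if `a ≤ C(m, i)` for some `m ≥ i`, then
`a^{(i)} ≤ C(m, i+1)`. -/
theorem macaulayShift_le_choose (a m i : ℕ) (ha : 0 < a) (hi : 0 < i)
    (hm : i ≤ m) (hle : a ≤ Nat.choose m i) :
    macaulayShift i a ≤ Nat.choose m (i + 1) := by
  exact macaulayShift_le_choose_aux i a m ha hi hm hle
end
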